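/- Let p₁, p₀, q₁, q₀, τ > 0 and ω₀ > 0 with (p₁ω₀)² + (p₀ - ω₀²)² ≠ 0 and (q₁ω₀)² + q₀² ≠ 0. If g(iω₀) = 0 where g(ζ) = ζ² + p₁ζ + p₀ + (q₁ζ + q₀)e^{-τζ}, then Re[(2iω₀ + p₁ + (q₁ - τ(q₁·iω₀ + q₀))e^{-iω₀τ}) / (iω₀(q₁·iω₀ + q₀)e^{-iω₀τ})] = (2ω₀² + p₁² - 2p₀ - q₁²)/((q₁ω₀)² + q₀²). -/

import Mathlib

/-!
Write `z = iω₀`, `P(z) = z² + p₁z + p₀`, `B(z) = q₁z + q₀` and `E = e^{-τz}`. The root condition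
`P + B E = 0` lets one eliminate `E`, splitting the quotient as `-(2z + p₁)/(zP) + q₁/(zB) - τ/z`.
The last term is purely imaginary, the other two have real parts with denominators `|P|²` and
`|B|²`, and these agree because `|E| = 1`.
-/

open Complex

theorem div_eq_neg_div_add_div_sub_div_of_add_mul_eq_zero {z P B E : ℂ} (a q τ : ℂ)
    (hz : z ≠ 0) (hB : B ≠ 0) (hE : E ≠ 0) (hroot : P + B * E = 0) :
    (a + (q - τ * B) * E) / (z * B * E) = -a / (z * P) + q / (z * B) - τ / z := by
  rw [eq_neg_of_add_eq_zero_left hroot]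
  field_simp
  ring

theorem normSq_eq_of_add_mul_eq_zero {P B E : ℂ} (hE : ‖E‖ = 1) (hroot : P + B * E = 0) :
    normSq P = normSq B := by
  rw [eq_neg_of_add_eq_zero_left hroot, normSq_neg, normSq_mul, normSq_eq_norm_sq E, hE]
  ring

theorem norm_exp_neg_ofReal_mul_I_mul_ofReal (τ ω : ℝ) : ‖exp (-(τ : ℂ) * (I * ω))‖ = 1 := by
  rw [norm_exp]
  simp

theorem re_div_I_mul_ofReal (w : ℂ) (ω : ℝ) : (w / (I * ω)).re = w.im / ω := by
  rw [div_mul_eq_div_div, div_I, div_ofReal_re]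
  simp

theorem linear_I_mul_eq (q1 q0 ω : ℝ) :
    (q1 : ℂ) * (I * ω) + q0 = q0 + (q1 * ω : ℝ) * I := by
  push_cast
  ring

theorem quadratic_I_mul_eq (p1 p0 ω : ℝ) :
    (I * ω) ^ 2 + (p1 : ℂ) * (I * ω) + p0 = (p0 - ω ^ 2 : ℝ) + (p1 * ω : ℝ) * I := by
  push_cast
  linear_combination (ω : ℂ) ^ 2 * I_sq

theorem normSq_linear_I_mul (q1 q0 ω : ℝ) :
    normSq ((q1 : ℂ) * (I * ω) + q0) = (q1 * ω) ^ 2 + q0 ^ 2 := by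
  rw [linear_I_mul_eq, normSq_add_mul_I, add_comm]

theorem normSq_quadratic_I_mul (p1 p0 ω : ℝ) :
    normSq ((I * ω) ^ 2 + (p1 : ℂ) * (I * ω) + p0) = (p1 * ω) ^ 2 + (p0 - ω ^ 2) ^ 2 := by
  rw [quadratic_I_mul_eq, normSq_add_mul_I, add_comm]

theorem re_div_I_mul_linear_I_mul (q1 q0 ω : ℝ) (hω : ω ≠ 0) :
    ((q1 : ℂ) / (I * ω * ((q1 : ℂ) * (I * ω) + q0))).re = -q1 ^ 2 / ((q1 * ω) ^ 2 + q0 ^ 2) := by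
  rw [div_mul_eq_div_div_swap, re_div_I_mul_ofReal, div_im, normSq_linear_I_mul, linear_I_mul_eq]
  simp only [add_re, add_im, mul_re, mul_im, ofReal_re, ofReal_im, I_re, I_im]
  field_simp
  ring

theorem re_neg_deriv_div_I_mul_quadratic_I_mul (p1 p0 ω : ℝ) (hω : ω ≠ 0) :
    (-(2 * (I * ω) + p1) / (I * ω * ((I * ω) ^ 2 + (p1 : ℂ) * (I * ω) + p0))).re =
      (2 * ω ^ 2 + p1 ^ 2 - 2 * p0) / ((p1 * ω) ^ 2 + (p0 - ω ^ 2) ^ 2) := by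
  rw [div_mul_eq_div_div_swap, re_div_I_mul_ofReal, div_im, normSq_quadratic_I_mul,
    quadratic_I_mul_eq]
  simp only [add_re, add_im, neg_re, neg_im, mul_re, mul_im, ofReal_re, ofReal_im, I_re, I_im,
    re_ofNat, im_ofNat]
  field_simp
  ring

theorem re_dtau_dzeta_general (p1 p0 q1 q0 τ ω0 : ℝ)
    (hω0 : 0 < ω0)
    (hden2 : (q1 * ω0) ^ 2 + q0 ^ 2 ≠ 0)
    (hroot : (Complex.I * ω0) ^ 2 + (p1 : ℂ) * (Complex.I * ω0) + (p0 : ℂ) +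
      ((q1 : ℂ) * (Complex.I * ω0) + (q0 : ℂ)) * Complex.exp (-(τ : ℂ) * (Complex.I * ω0)) = 0) :
    ((2 * (Complex.I * ω0) + (p1 : ℂ) +
        ((q1 : ℂ) - (τ : ℂ) * ((q1 : ℂ) * (Complex.I * ω0) + (q0 : ℂ))) *
          Complex.exp (-(τ : ℂ) * (Complex.I * ω0))) /
      (Complex.I * ω0 * ((q1 : ℂ) * (Complex.I * ω0) + (q0 : ℂ)) *
        Complex.exp (-(τ : ℂ) * (Complex.I * ω0)))).re =
    (2 * ω0 ^ 2 + p1 ^ 2 - 2 * p0 - q1 ^ 2) / ((q1 * ω0) ^ 2 + q0 ^ 2) := by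
  have hω0' : ω0 ≠ 0 := hω0.ne'
  have hz : I * (ω0 : ℂ) ≠ 0 := mul_ne_zero I_ne_zero (ofReal_ne_zero.mpr hω0')
  have hB : (q1 : ℂ) * (I * ω0) + q0 ≠ 0 := by
    rwa [Ne, ← normSq_eq_zero, normSq_linear_I_mul]
  have hmod : (p1 * ω0) ^ 2 + (p0 - ω0 ^ 2) ^ 2 = (q1 * ω0) ^ 2 + q0 ^ 2 := by
    rw [← normSq_quadratic_I_mul, ← normSq_linear_I_mul]
    exact normSq_eq_of_add_mul_eq_zero (norm_exp_neg_ofReal_mul_I_mul_ofReal τ ω0) hroot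
  rw [div_eq_neg_div_add_div_sub_div_of_add_mul_eq_zero _ _ _ hz hB (exp_ne_zero _) hroot,
    sub_re, add_re, re_neg_deriv_div_I_mul_quadratic_I_mul _ _ _ hω0',
    re_div_I_mul_linear_I_mul _ _ _ hω0', re_div_I_mul_ofReal, ofReal_im, hmod]
  ring

theorem re_dtau_dzeta (p1 p0 q1 q0 τ ω0 : ℝ)
    (hp1 : 0 < p1) (hp0 : 0 < p0) (hq1 : 0 < q1) (hq0 : 0 < q0) (hτ : 0 < τ)
    (hω0 : 0 < ω0)
    (hden1 : (p1 * ω0) ^ 2 + (p0 - ω0 ^ 2) ^ 2 ≠ 0)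
    (hden2 : (q1 * ω0) ^ 2 + q0 ^ 2 ≠ 0)
    (hroot : (Complex.I * ω0) ^ 2 + (p1 : ℂ) * (Complex.I * ω0) + (p0 : ℂ) +
      ((q1 : ℂ) * (Complex.I * ω0) + (q0 : ℂ)) * Complex.exp (-(τ : ℂ) * (Complex.I * ω0)) = 0) :
    ((2 * (Complex.I * ω0) + (p1 : ℂ) +
        ((q1 : ℂ) - (τ : ℂ) * ((q1 : ℂ) * (Complex.I * ω0) + (q0 : ℂ))) *
          Complex.exp (-(τ : ℂ) * (Complex.I * ω0))) /
      (Complex.I * ω0 * ((q1 : ℂ) * (Complex.I * ω0) + (q0 : ℂ)) *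
        Complex.exp (-(τ : ℂ) * (Complex.I * ω0)))).re =
    (2 * ω0 ^ 2 + p1 ^ 2 - 2 * p0 - q1 ^ 2) / ((q1 * ω0) ^ 2 + q0 ^ 2) :=
  re_dtau_dzeta_general p1 p0 q1 q0 τ ω0 hω0 hden2 hroot
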